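/- arXiv:2411.11785 — 5 statements merged into one kernel-verified Lean document; each statement's English description precedes it below -/
import Mathlib

section
/- Let G be an r-uniform multi-hypergraph on N vertices with maximum degree at most μ times the average degree, where μ ≥ 1. Let t be a positive integer with t ≤ N/(2r²μ) + 1. Then G contains at least (e(G)/(2t))^t matchings of size t (a matching being a set of pairwise disjoint hyperedges). -/
/-!
Count ordered `t`-tuples of pairwise disjoint edges, choosing one edge at a time. After `i < t`
edges have been chosen they cover at most `i r` vertices, each of degree at most `μ r e(G) / N`,
so at most `i r² μ e(G) / N ≤ e(G) / 2` edges are blocked: there are at least `(e(G)/2)^t` such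
tuples. Each matching of size `t` arises from at most `t^t` tuples.
-/

open Finset

namespace MultiHypergraph

variable {V E : Type*} [Fintype E] [DecidableEq V] (f : E → Finset V)

def degree (v : V) : ℕ := #{e | v ∈ f e}

def compatibleEdges {i : ℕ} (g : Fin i → E) : Finset E :=
  {e | ∀ a, Disjoint (f (g a)) (f e)}

def disjointTuples (i : ℕ) : Finset (Fin i → E) :=
  {g | ∀ a b, a ≠ b → Disjoint (f (g a)) (f (g b))}

lemma snoc_mem_disjointTuples {i : ℕ} {g : Fin i → E} (hg : g ∈ disjointTuples f i)
    {e : E} (he : e ∈ compatibleEdges f g) :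
    (Fin.snoc g e : Fin (i + 1) → E) ∈ disjointTuples f (i + 1) := by
  simp only [disjointTuples, compatibleEdges, mem_filter, mem_univ, true_and] at hg he ⊢
  intro a b hab
  induction a using Fin.lastCases <;> induction b using Fin.lastCases <;>
    simp only [Fin.snoc_last, Fin.snoc_castSucc]
  · exact absurd rfl hab
  · exact (he _).symm
  · exact he _
  · exact hg _ _ fun h => hab (congrArg _ h)

lemma sum_card_compatibleEdges_le (i : ℕ) :
    ∑ g ∈ disjointTuples f i, #(compatibleEdges f g) ≤ #(disjointTuples f (i + 1)) := by
  rw [← card_sigma]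
  refine card_le_card_of_injOn (fun p => Fin.snoc p.1 p.2) (fun p hp => ?_) ?_
  · obtain ⟨hg, he⟩ := mem_sigma.1 hp
    exact snoc_mem_disjointTuples f hg he
  · rintro ⟨g₁, e₁⟩ - ⟨g₂, e₂⟩ - h
    obtain ⟨rfl, rfl⟩ := Fin.snoc_injective2 h
    rfl

lemma pow_le_card_disjointTuples {t : ℕ} {k : ℝ} (hk : 0 ≤ k)
    (hext : ∀ i < t, ∀ g ∈ disjointTuples f i, k ≤ #(compatibleEdges f g)) :
    k ^ t ≤ #(disjointTuples f t) := by
  induction t with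
  | zero => simp [disjointTuples]
  | succ i ih =>
    calc k ^ (i + 1) ≤ #(disjointTuples f i) * k :=
          pow_succ k i ▸ mul_le_mul_of_nonneg_right (ih fun j hj => hext j (by omega)) hk
      _ = ∑ _g ∈ disjointTuples f i, k := by simp
      _ ≤ ∑ g ∈ disjointTuples f i, (#(compatibleEdges f g) : ℝ) :=
          sum_le_sum fun g hg => hext i (by omega) g hg
      _ ≤ #(disjointTuples f (i + 1)) := by exact_mod_cast sum_card_compatibleEdges_le f i

variable [DecidableEq E]

lemma card_filter_not_disjoint_le_sum_degree (U : Finset V) :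
    #{e | ¬Disjoint U (f e)} ≤ ∑ v ∈ U, degree f v := by
  refine (card_le_card fun e he => ?_).trans card_biUnion_le
  obtain ⟨v, hvU, hve⟩ := not_disjoint_iff.1 (mem_filter.1 he).2
  exact mem_biUnion.2 ⟨v, hvU, by simpa using hve⟩

lemma card_compatibleEdges_ge {r : ℕ} (hunif : ∀ e, #(f e) = r) {D : ℝ}
    (hdeg : ∀ v, (degree f v : ℝ) ≤ D) {i : ℕ} (g : Fin i → E) :
    (Fintype.card E : ℝ) - i * (r * D) ≤ #(compatibleEdges f g) := by
  have hbad : #{e | ¬∀ a, Disjoint (f (g a)) (f e)} ≤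
      ∑ a, #{e | ¬Disjoint (f (g a)) (f e)} := by
    refine (card_le_card fun e he => ?_).trans card_biUnion_le
    push Not at he
    simpa using he
  have hstar (a : Fin i) : (#{e | ¬Disjoint (f (g a)) (f e)} : ℝ) ≤ r * D :=
    calc (#{e | ¬Disjoint (f (g a)) (f e)} : ℝ)
        ≤ ∑ v ∈ f (g a), (degree f v : ℝ) := by
          exact_mod_cast card_filter_not_disjoint_le_sum_degree f _
      _ ≤ ∑ _v ∈ f (g a), D := sum_le_sum fun v _ => hdeg v
      _ = r * D := by simp [hunif]
  have hsplit := card_filter_add_card_filter_not (s := univ)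
    (fun e => ∀ a, Disjoint (f (g a)) (f e))
  have hbadR : (#{e | ¬∀ a, Disjoint (f (g a)) (f e)} : ℝ) ≤ i * (r * D) :=
    calc _ ≤ ∑ a, (#{e | ¬Disjoint (f (g a)) (f e)} : ℝ) := by exact_mod_cast hbad
      _ ≤ ∑ _a : Fin i, r * D := sum_le_sum fun a _ => hstar a
      _ = i * (r * D) := by simp
  rw [card_univ] at hsplit
  rw [compatibleEdges, ← hsplit]
  push_cast
  linarith

def matchings (t : ℕ) : Finset (Finset E) :=
  {S | #S = t ∧ ∀ e₁ ∈ S, ∀ e₂ ∈ S, e₁ ≠ e₂ → Disjoint (f e₁) (f e₂)}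

lemma image_mem_matchings (hne : ∀ e, (f e).Nonempty) {t : ℕ} {g : Fin t → E}
    (hg : g ∈ disjointTuples f t) : univ.image g ∈ matchings f t := by
  simp only [disjointTuples, matchings, mem_filter, mem_univ, true_and] at hg ⊢
  have hinj : Function.Injective g := fun a b hab => by
    by_contra hne'
    simpa [hab, (hne (g b)).ne_empty] using hg a b hne'
  refine ⟨by simp [card_image_of_injective _ hinj], ?_⟩
  simp only [mem_image, mem_univ, true_and]
  rintro _ ⟨a, rfl⟩ _ ⟨b, rfl⟩ hab
  exact hg a b fun h => hab (congrArg g h)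

lemma card_disjointTuples_le (hne : ∀ e, (f e).Nonempty) (t : ℕ) :
    #(disjointTuples f t) ≤ t ^ t * #(matchings f t) := by
  refine card_le_mul_card_image_of_maps_to (fun g hg => image_mem_matchings f hne hg) _
    fun S hS => ?_
  calc #{g ∈ disjointTuples f t | univ.image g = S}
      ≤ #(Fintype.piFinset fun _ : Fin t => S) := card_le_card fun g hg => by
        simp only [mem_filter] at hg
        simp [Fintype.mem_piFinset, ← hg.2]
    _ = t ^ t := by rw [Fintype.card_piFinset_const, (mem_filter.1 hS).2.1]

end MultiHypergraph

theorem stmt_0_general {V E : Type*} [Fintype V] [Fintype E] [DecidableEq V] [DecidableEq E]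
    [Nonempty V]
    (r t : ℕ) (hr : 1 ≤ r) (μ : ℝ) (hμ : 1 ≤ μ)
    (f : E → Finset V) (hunif : ∀ e, (f e).card = r)
    (hmax : ∀ v : V, ((Finset.univ.filter (fun e : E => v ∈ f e)).card : ℝ) ≤
      μ * ((r * Fintype.card E : ℝ) / (Fintype.card V : ℝ)))
    (ht2 : (t : ℝ) ≤ (Fintype.card V : ℝ) / (2 * r ^ 2 * μ) + 1) :
    ((Fintype.card E : ℝ) / (2 * t)) ^ t ≤
      ((Finset.univ.filter (fun S : Finset E => S.card = t ∧
        ∀ e₁ ∈ S, ∀ e₂ ∈ S, e₁ ≠ e₂ → Disjoint (f e₁) (f e₂))).card : ℝ) := by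
  set m : ℝ := (Fintype.card E : ℝ)
  set N : ℝ := (Fintype.card V : ℝ)
  have hN : 0 < N := Nat.cast_pos.2 Fintype.card_pos
  have hblocked : ∀ i < t, (i : ℝ) * (r * (μ * (r * m / N))) ≤ m / 2 := by
    intro i hi
    have hiN : (i : ℝ) * (2 * r ^ 2 * μ) ≤ N := by
      have : (i : ℝ) + 1 ≤ t := by exact_mod_cast hi
      rw [← le_div_iff₀ (by positivity)]
      linarith
    calc (i : ℝ) * (r * (μ * (r * m / N))) = i * (2 * r ^ 2 * μ) * m / (2 * N) := by
          field_simp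
      _ ≤ N * m / (2 * N) := by gcongr
      _ = m / 2 := by field_simp
  have htuples : (m / 2) ^ t ≤ #(MultiHypergraph.disjointTuples f t) :=
    MultiHypergraph.pow_le_card_disjointTuples f (by positivity) fun i hi g _ => by
      linarith [MultiHypergraph.card_compatibleEdges_ge f hunif hmax g, hblocked i hi]
  have hcount := MultiHypergraph.card_disjointTuples_le f
    (fun e => card_pos.1 (hunif e ▸ hr)) t
  calc (m / (2 * t)) ^ t = (m / 2) ^ t / (t : ℝ) ^ t := by rw [← div_pow, div_div]
    _ ≤ #(MultiHypergraph.matchings f t) := div_le_of_le_mul₀ (by positivity) (by positivity)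
      (htuples.trans (by rw [mul_comm]; exact_mod_cast hcount))

/-- An r-uniform multi-hypergraph (edge index type `E`, edge map `f`)
on `N = card V` vertices with max degree at most `μ` times the average degree
`r * e(G) / N`, and `t ≤ N/(2r²μ) + 1`, contains at least `(e(G)/(2t))^t`
matchings of size `t`. -/
theorem stmt_0 {V E : Type*} [Fintype V] [Fintype E] [DecidableEq V] [DecidableEq E]
    [Nonempty V]
    (r t : ℕ) (hr : 1 ≤ r) (ht : 1 ≤ t) (μ : ℝ) (hμ : 1 ≤ μ)
    (f : E → Finset V) (hunif : ∀ e, (f e).card = r)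
    (hmax : ∀ v : V, ((Finset.univ.filter (fun e : E => v ∈ f e)).card : ℝ) ≤
      μ * ((r * Fintype.card E : ℝ) / (Fintype.card V : ℝ)))
    (ht2 : (t : ℝ) ≤ (Fintype.card V : ℝ) / (2 * r ^ 2 * μ) + 1) :
    ((Fintype.card E : ℝ) / (2 * t)) ^ t ≤
      ((Finset.univ.filter (fun S : Finset E => S.card = t ∧
        ∀ e₁ ∈ S, ∀ e₂ ∈ S, e₁ ≠ e₂ → Disjoint (f e₁) (f e₂))).card : ℝ) :=
  stmt_0_general r t hr μ hμ f hunif hmax ht2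
end

section
/- Let G be a graph with at most n vertices, all of whose degrees lie in the interval [d/5, d], where d ≥ 1. Then G contains a nonempty subgraph H whose minimum degree is at least Δ(H)/4 and whose minimum degree is at least d/(500·log(8n/d)). (Weaker quantitative version of the 4-almost-regular extraction.) -/
/-!
Fix `s ≈ d / (500 log₂ (8n/d))` and take a maximal edge set `E ⊆ G` of maximum degree `4s`. If the
`s`-core of `E` is nonempty, its degrees lie in `[s, 4s]`. Otherwise `E` has fewer than `s·n` edges,
so fewer than half of the vertices are saturated (degree `4s` in `E`), and by maximality every
unsaturated vertex has all but `4s` of its at least `d/5` neighbours among the saturated ones.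
Pairing unsaturated vertices `A` with the saturated set `B` and repeating the argument on the edges
between `A` and `B` halves `|B|` while costing `4s` of the degree from `A` into `B`; after about
`log₂ (8n/d)` rounds `|B|` would be smaller than that degree.
-/

open Finset

namespace AlmostRegular

variable {V : Type*} [DecidableEq V]

def edgeDegree (E : Finset (Sym2 V)) (v : V) : ℕ := #{e ∈ E | v ∈ e}

lemma edgeDegree_mono {E E' : Finset (Sym2 V)} (h : E ⊆ E') (v : V) :
    edgeDegree E v ≤ edgeDegree E' v :=
  card_le_card (filter_subset_filter _ h)

lemma edgeDegree_insert_le {E : Finset (Sym2 V)} (e : Sym2 V) (v : V) :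
    edgeDegree (insert e E) v ≤ edgeDegree E v + if v ∈ e then 1 else 0 := by
  unfold edgeDegree
  rw [filter_insert]
  split_ifs
  · exact card_insert_le _ _
  · rfl

lemma sum_edgeDegree (T : Finset V) (E : Finset (Sym2 V)) :
    ∑ v ∈ T, edgeDegree E v = ∑ e ∈ E, #{v ∈ T | v ∈ e} := by
  simp only [edgeDegree, card_filter]
  exact sum_comm

lemma card_filter_mem_le_two (T : Finset V) (e : Sym2 V) : #{v ∈ T | v ∈ e} ≤ 2 := by
  induction e using Sym2.ind with
  | _ a b =>
    calc #{v ∈ T | v ∈ s(a, b)} ≤ #({a, b} : Finset V) :=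
          card_le_card fun x hx => by simp_all
      _ ≤ 2 := card_le_two

lemma card_filter_mem_mk_le_one {T : Finset V} {a : V} (ha : a ∉ T) (b : V) :
    #{v ∈ T | v ∈ s(a, b)} ≤ 1 :=
  calc #{v ∈ T | v ∈ s(a, b)} ≤ #({b} : Finset V) :=
        card_le_card fun x hx => by
          simp only [mem_filter, Sym2.mem_iff] at hx
          rcases hx with ⟨hxT, rfl | rfl⟩
          · exact absurd hxT ha
          · exact mem_singleton_self x
    _ = 1 := card_singleton b

lemma card_filter_le_edgeDegree_mul_le {T : Finset V} {E : Finset (Sym2 V)} {c : ℕ}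
    (h : ∀ e ∈ E, #{v ∈ T | v ∈ e} ≤ c) (k : ℕ) :
    #{v ∈ T | k ≤ edgeDegree E v} * k ≤ c * #E :=
  calc #{v ∈ T | k ≤ edgeDegree E v} * k
      ≤ ∑ v ∈ {v ∈ T | k ≤ edgeDegree E v}, edgeDegree E v := by
        simpa using card_nsmul_le_sum _ _ k fun v hv => (mem_filter.mp hv).2
    _ = ∑ e ∈ E, #{v ∈ {v ∈ T | k ≤ edgeDegree E v} | v ∈ e} := sum_edgeDegree _ _
    _ ≤ ∑ _e ∈ E, c := sum_le_sum fun e he =>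
        (card_le_card (filter_subset_filter _ (filter_subset _ _))).trans (h e he)
    _ = c * #E := by rw [sum_const, smul_eq_mul, mul_comm]

lemma two_mul_card_filter_le_edgeDegree_lt {s b c : ℕ} {T : Finset V} {E : Finset (Sym2 V)}
    (hs : 1 ≤ s) (hb : 0 < b) (hT : ∀ e ∈ E, #{v ∈ T | v ∈ e} ≤ c)
    (hE : c * #E ≤ 2 * ((s - 1) * b)) :
    2 * #{v ∈ T | 4 * s ≤ edgeDegree E v} < b := by
  have hcount := card_filter_le_edgeDegree_mul_le hT (4 * s)
  obtain ⟨s, rfl⟩ := Nat.exists_eq_add_of_le hs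
  simp only [Nat.add_sub_cancel_left] at hE
  nlinarith

lemma card_inter_sym2_eq_erase_add_edgeDegree (E : Finset (Sym2 V)) (W : Finset V) (v : V) :
    #(E ∩ W.sym2) = #(E ∩ (W.erase v).sym2) + edgeDegree (E ∩ W.sym2) v := by
  rw [edgeDegree, ← card_filter_add_card_filter_not (s := E ∩ W.sym2) (v ∈ ·), add_comm]
  congr 2
  ext e
  simp only [mem_filter, mem_inter, mem_sym2_iff, mem_erase]
  constructor
  · rintro ⟨⟨hE, hW⟩, hve⟩
    exact ⟨hE, fun x hx => ⟨fun h => hve (h ▸ hx), hW x hx⟩⟩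
  · rintro ⟨hE, hW⟩
    exact ⟨⟨hE, fun x hx => (hW x hx).2⟩, fun hve => (hW v hve).1 rfl⟩

/-- A smallest `W ⊆ X` with more than `(s - 1) * #W` edges inside works: removing a vertex of
degree below `s` from it would give a smaller one. -/
lemma exists_le_edgeDegree_of_mul_card_lt {s : ℕ} {X : Finset V} {E : Finset (Sym2 V)}
    (h : (s - 1) * #X < #(E ∩ X.sym2)) :
    ∃ W ⊆ X, W.Nonempty ∧ ∀ v ∈ W, s ≤ edgeDegree (E ∩ W.sym2) v := by
  obtain ⟨W, hW, hmin⟩ := exists_min_image {W ∈ X.powerset | (s - 1) * #W < #(E ∩ W.sym2)}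
    card ⟨X, mem_filter.mpr ⟨mem_powerset_self X, h⟩⟩
  obtain ⟨hWX, hWE⟩ := mem_filter.mp hW
  refine ⟨W, mem_powerset.mp hWX, ?_, fun v hv => ?_⟩
  · rw [nonempty_iff_ne_empty]
    rintro rfl
    simp at hWE
  · by_contra hlow
    have hcard := card_inter_sym2_eq_erase_add_edgeDegree E W v
    have hmem : W.erase v ∈ {W ∈ X.powerset | (s - 1) * #W < #(E ∩ W.sym2)} := by
      refine mem_filter.mpr ⟨mem_powerset.mpr ((erase_subset v W).trans
        (mem_powerset.mp hWX)), ?_⟩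
      have hsucc : #(W.erase v) + 1 = #W := card_erase_add_one hv
      have : (s - 1) * #W = (s - 1) * #(W.erase v) + (s - 1) := by rw [← hsucc]; ring
      omega
    have := hmin _ hmem
    rw [card_erase_of_mem hv] at this
    have : 0 < #W := card_pos.mpr ⟨v, hv⟩
    omega

variable [Fintype V]

lemma exists_maximal_edgeDegree_le (F : Finset (Sym2 V)) (c : ℕ) :
    ∃ E ⊆ F, (∀ v, edgeDegree E v ≤ c) ∧
      ∀ e ∈ F, e ∉ E → ∃ v ∈ e, c ≤ edgeDegree E v := by
  obtain ⟨E, hE, hmax⟩ := exists_max_image {E ∈ F.powerset | ∀ v, edgeDegree E v ≤ c} card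
    ⟨∅, mem_filter.mpr ⟨empty_mem_powerset F, fun v => by simp [edgeDegree]⟩⟩
  obtain ⟨hEF, hcap⟩ := mem_filter.mp hE
  refine ⟨E, mem_powerset.mp hEF, hcap, fun e he heE => ?_⟩
  by_contra! hroom
  have hmem : insert e E ∈ {E ∈ F.powerset | ∀ v, edgeDegree E v ≤ c} := by
    refine mem_filter.mpr
      ⟨mem_powerset.mpr (insert_subset he (mem_powerset.mp hEF)), fun v => ?_⟩
    have := edgeDegree_insert_le (E := E) e v
    split_ifs at this with hv
    · have := hroom v hv
      omega
    · exact this.trans (hcap v)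
  have := hmax _ hmem
  rw [card_insert_of_notMem heE] at this
  omega

lemma ncard_setOf_mk_mem_eq_edgeDegree (E : Finset (Sym2 V)) (v : V) :
    {w | s(v, w) ∈ E}.ncard = edgeDegree E v := by
  have himage : {e ∈ E | v ∈ e} = {w | s(v, w) ∈ E}.toFinset.image (fun w => s(v, w)) := by
    ext e
    simp only [mem_filter, mem_image, Set.mem_toFinset, Set.mem_ofPred_eq]
    constructor
    · rintro ⟨he, hv⟩
      obtain ⟨w, rfl⟩ := Sym2.mem_iff_exists.mp hv
      exact ⟨w, he, rfl⟩
    · rintro ⟨w, hw, rfl⟩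
      exact ⟨hw, Sym2.mem_mk_left v w⟩
  rw [edgeDegree, himage, card_image_of_injective _ fun _ _ => Sym2.congr_right.mp,
    Set.ncard_eq_toFinset_card']

end AlmostRegular

namespace SimpleGraph

open AlmostRegular

variable {V : Type*} (G : SimpleGraph V)

def HasAlmostRegularSubgraph (s : ℕ) : Prop :=
  ∃ H : G.Subgraph, H.verts.Nonempty ∧
    ∀ v ∈ H.verts, s ≤ {w | H.Adj v w}.ncard ∧ {w | H.Adj v w}.ncard ≤ 4 * s

variable [DecidableRel G.Adj]

structure IsBalancedPair (m : ℕ) (A B : Finset V) : Prop where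
  disjoint : Disjoint A B
  nonempty : A.Nonempty
  card_eq : #A = #B
  le_card_adj : ∀ a ∈ A, m ≤ #{b ∈ B | G.Adj a b}

variable {G}

lemma IsBalancedPair.le_card {m : ℕ} {A B : Finset V} (h : G.IsBalancedPair m A B) : m ≤ #B :=
  let ⟨a, ha⟩ := h.nonempty
  (h.le_card_adj a ha).trans (card_filter_le _ _)

lemma exists_isBalancedPair_of_card_lt {m : ℕ} {U S : Finset V} (hUS : Disjoint U S)
    (hcard : #S < #U) (hm : 0 < m) (hadj : ∀ u ∈ U, m ≤ #{w ∈ S | G.Adj u w}) :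
    ∃ A ⊆ U, G.IsBalancedPair m A S := by
  obtain ⟨A, hAU, hA⟩ := exists_subset_card_eq hcard.le
  obtain ⟨u, hu⟩ := card_pos.mp (hcard.trans_le' (Nat.zero_le _))
  have hS : 0 < #S := hm.trans_le ((hadj u hu).trans (card_filter_le _ _))
  exact ⟨A, hAU, hUS.mono_left hAU, card_pos.mp (hA ▸ hS), hA, fun a ha => hadj a (hAU ha)⟩

lemma card_adj_le_card_adj_filter_add [DecidableEq V] {c : ℕ} {F E : Finset (Sym2 V)}
    (hmax : ∀ e ∈ F, e ∉ E → ∃ v ∈ e, c ≤ edgeDegree E v) {u : V}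
    (hu : ¬c ≤ edgeDegree E u) (B : Finset V) (hB : ∀ w ∈ B, G.Adj u w → s(u, w) ∈ F) :
    #{w ∈ B | G.Adj u w} ≤ #{w ∈ {w ∈ B | c ≤ edgeDegree E w} | G.Adj u w} + c := by
  have hsplit := card_filter_add_card_filter_not (s := {w ∈ B | G.Adj u w})
    (c ≤ edgeDegree E ·)
  rw [filter_filter, filter_filter] at hsplit
  have hfilter : {w ∈ {w ∈ B | c ≤ edgeDegree E w} | G.Adj u w} =
      {w ∈ B | G.Adj u w ∧ c ≤ edgeDegree E w} := by
    rw [filter_filter]; simp only [and_comm]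
  -- both ends of a missing edge of `F` would be unsaturated, contradicting maximality
  have hunsat : #{w ∈ B | G.Adj u w ∧ ¬c ≤ edgeDegree E w} ≤ edgeDegree E u := by
    refine card_le_card_of_injOn (fun w => s(u, w)) (fun w hw => ?_)
      fun _ _ _ _ => Sym2.congr_right.mp
    obtain ⟨hwB, hadj, hw⟩ := mem_filter.mp hw
    refine mem_filter.mpr ⟨?_, Sym2.mem_mk_left u w⟩
    by_contra hnot
    obtain ⟨x, hx, hsat⟩ := hmax _ (hB w hwB hadj) hnot
    rcases Sym2.mem_iff.mp hx with rfl | rfl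
    exacts [hu hsat, hw hsat]
  rw [hfilter]
  omega

variable [Fintype V] [DecidableEq V]

lemma hasAlmostRegularSubgraph_of_edges {s : ℕ} {W : Finset V} {E : Finset (Sym2 V)}
    (hW : W.Nonempty) (hEG : E ⊆ G.edgeFinset) (hEW : E ⊆ W.sym2)
    (hdeg : ∀ v ∈ W, s ≤ edgeDegree E v ∧ edgeDegree E v ≤ 4 * s) :
    G.HasAlmostRegularSubgraph s := by
  let H : G.Subgraph :=
    { verts := W
      Adj := fun x y => s(x, y) ∈ E
      adj_sub := fun h => mem_edgeFinset.mp (hEG h)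
      edge_vert := fun h => mem_sym2_iff.mp (hEW h) _ (Sym2.mem_mk_left _ _)
      symm := ⟨fun x y h => by rwa [Sym2.eq_swap]⟩ }
  refine ⟨H, hW, fun v hv => ?_⟩
  rw [show {w | H.Adj v w} = {w | s(v, w) ∈ E} from rfl, ncard_setOf_mk_mem_eq_edgeDegree]
  exact hdeg v hv

lemma hasAlmostRegularSubgraph_one_of_adj {u v : V} (h : G.Adj u v) :
    G.HasAlmostRegularSubgraph 1 := by
  refine hasAlmostRegularSubgraph_of_edges (W := {u, v}) (E := {s(u, v)}) (insert_nonempty _ _)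
    (by simpa using h) (by simp [Sym2.mem_iff]) fun w hw => ?_
  have : edgeDegree {s(u, v)} w = 1 := by
    simp only [mem_insert, mem_singleton] at hw
    rcases hw with rfl | rfl <;> simp [edgeDegree, filter_singleton]
  omega

lemma hasAlmostRegularSubgraph_or_exists_sparse_maximal {s : ℕ} {X : Finset V}
    {F : Finset (Sym2 V)} (hFG : F ⊆ G.edgeFinset) (hFX : F ⊆ X.sym2) :
    G.HasAlmostRegularSubgraph s ∨ ∃ E ⊆ F,
      (∀ e ∈ F, e ∉ E → ∃ v ∈ e, 4 * s ≤ edgeDegree E v) ∧ #E ≤ (s - 1) * #X := by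
  obtain ⟨E, hEF, hcap, hmax⟩ := exists_maximal_edgeDegree_le F (4 * s)
  by_cases hdense : (s - 1) * #X < #E
  · rw [← inter_eq_left.mpr (hEF.trans hFX)] at hdense
    obtain ⟨W, -, hW, hdeg⟩ := exists_le_edgeDegree_of_mul_card_lt hdense
    exact .inl <| hasAlmostRegularSubgraph_of_edges hW
      ((inter_subset_left.trans hEF).trans hFG) inter_subset_right fun v hv =>
        ⟨hdeg v hv, (edgeDegree_mono inter_subset_left v).trans (hcap v)⟩
  · exact .inr ⟨E, hEF, hmax, not_lt.mp hdense⟩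

variable (G) in
def crossEdges (A B : Finset V) : Finset (Sym2 V) :=
  {e ∈ G.edgeFinset | ∃ a ∈ A, ∃ b ∈ B, e = s(a, b)}

lemma IsBalancedPair.hasAlmostRegularSubgraph_or_halve {s m : ℕ} {A B : Finset V}
    (hs : 1 ≤ s) (hP : G.IsBalancedPair m A B) (hm : 4 * s < m) :
    G.HasAlmostRegularSubgraph s ∨
      ∃ A' B', G.IsBalancedPair (m - 4 * s) A' B' ∧ 2 * #B' < #B := by
  have hcross : ∀ e ∈ crossEdges G A B, ∃ a ∈ A, ∃ b ∈ B, e = s(a, b) := fun e he =>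
    (mem_filter.mp he).2
  have hFX : crossEdges G A B ⊆ (A ∪ B).sym2 := fun e he => by
    obtain ⟨a, ha, b, hb, rfl⟩ := hcross e he
    simp [ha, hb]
  refine (hasAlmostRegularSubgraph_or_exists_sparse_maximal (filter_subset _ _) hFX).imp_right ?_
  rintro ⟨E, hEF, hmax, hE⟩
  have hB : 0 < #B := (hm.trans_le hP.le_card).trans_le' (Nat.zero_le _)
  have hE : 1 * #E ≤ 2 * ((s - 1) * #B) := by
    rw [card_union_of_disjoint hP.disjoint, hP.card_eq] at hE
    linarith [show (s - 1) * (#B + #B) = 2 * ((s - 1) * #B) by ring]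
  have hsat : ∀ T : Finset V, (∀ e ∈ E, #{v ∈ T | v ∈ e} ≤ 1) →
      2 * #{v ∈ T | 4 * s ≤ edgeDegree E v} < #B := fun T hT =>
    two_mul_card_filter_le_edgeDegree_lt hs hB hT hE
  have hsatB := hsat B fun e he => by
    obtain ⟨a, ha, b, -, rfl⟩ := hcross e (hEF he)
    exact card_filter_mem_mk_le_one (Finset.disjoint_left.mp hP.disjoint ha) b
  have hsatA := hsat A fun e he => by
    obtain ⟨a, -, b, hb, rfl⟩ := hcross e (hEF he)
    rw [Sym2.eq_swap]
    exact card_filter_mem_mk_le_one (Finset.disjoint_right.mp hP.disjoint hb) a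
  have hunsatA := card_filter_add_card_filter_not (s := A) (4 * s ≤ edgeDegree E ·)
  have := hP.card_eq
  refine (exists_isBalancedPair_of_card_lt (G := G)
    (U := {a ∈ A | ¬4 * s ≤ edgeDegree E a}) (S := {b ∈ B | 4 * s ≤ edgeDegree E b})
    (hP.disjoint.mono (filter_subset _ _) (filter_subset _ _)) (by omega) (by omega)
    fun a ha => ?_).imp fun A' ⟨_, hP'⟩ =>
      ⟨{b ∈ B | 4 * s ≤ edgeDegree E b}, hP', hsatB⟩
  obtain ⟨haA, ha⟩ := mem_filter.mp ha
  have := card_adj_le_card_adj_filter_add hmax ha B fun b hb hab =>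
    mem_filter.mpr ⟨mem_edgeFinset.mpr hab, a, haA, b, hb, rfl⟩
  have := hP.le_card_adj a haA
  omega

lemma IsBalancedPair.hasAlmostRegularSubgraph {s : ℕ} (hs : 1 ≤ s) (k : ℕ) :
    ∀ {m : ℕ} {A B : Finset V}, G.IsBalancedPair m A B → #B < 2 ^ k * (m - 4 * s * k) →
      G.HasAlmostRegularSubgraph s := by
  induction k with
  | zero =>
    intro m A B hP hB
    simp only [pow_zero, one_mul, mul_zero, Nat.sub_zero] at hB
    exact absurd hP.le_card (not_le.mpr hB)
  | succ k ih =>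
    intro m A B hP hB
    have hsub : m - 4 * s * (k + 1) = m - 4 * s - 4 * s * k := by
      rw [Nat.sub_sub, mul_add_one, add_comm]
    rw [hsub, pow_succ] at hB
    have hm : 4 * s < m := by
      by_contra! h
      simp [Nat.sub_eq_zero_of_le h] at hB
    refine (hP.hasAlmostRegularSubgraph_or_halve hs hm).elim id ?_
    rintro ⟨A', B', hP', hB'⟩
    exact ih hP' (by rw [mul_comm _ 2, mul_assoc] at hB; omega)

lemma hasAlmostRegularSubgraph_or_exists_isBalancedPair [Nonempty V] {s D : ℕ} (hs : 1 ≤ s)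
    (hD : 4 * s < D) (hdeg : ∀ v, D ≤ G.degree v) :
    G.HasAlmostRegularSubgraph s ∨
      ∃ A B, G.IsBalancedPair (D - 4 * s) A B ∧ 2 * #B < Fintype.card V := by
  refine (hasAlmostRegularSubgraph_or_exists_sparse_maximal (X := univ) subset_rfl
    fun e _ => mem_sym2_iff.mpr fun v _ => mem_univ v).imp_right ?_
  rintro ⟨E, -, hmax, hE⟩
  rw [card_univ] at hE
  have hsat := two_mul_card_filter_le_edgeDegree_lt hs Fintype.card_pos
    (fun e _ => card_filter_mem_le_two univ e)
    (by omega : 2 * #E ≤ 2 * ((s - 1) * Fintype.card V))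
  have hunsat := card_filter_add_card_filter_not (s := univ) (4 * s ≤ edgeDegree E ·)
  rw [card_univ] at hunsat
  obtain ⟨A, -, hP⟩ := exists_isBalancedPair_of_card_lt (G := G) (m := D - 4 * s)
    (U := {v | ¬4 * s ≤ edgeDegree E v}) (S := {v | 4 * s ≤ edgeDegree E v})
    (disjoint_filter_filter_not _ _ _).symm (by omega) (by omega) fun u hu => by
      have := card_adj_le_card_adj_filter_add hmax (mem_filter.mp hu).2 univ
        fun w _ hw => mem_edgeFinset.mpr hw
      have := hdeg u
      rw [degree, neighborFinset_eq_filter] at this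
      omega
  exact ⟨A, _, hP, hsat⟩

theorem hasAlmostRegularSubgraph_of_card_le [Nonempty V] {s D k : ℕ} (hs : 1 ≤ s)
    (hdeg : ∀ v, D ≤ G.degree v) (hV : Fintype.card V ≤ 2 ^ (k + 1) * (D - 4 * s * (k + 1))) :
    G.HasAlmostRegularSubgraph s := by
  have hsub : D - 4 * s * (k + 1) = D - 4 * s - 4 * s * k := by
    rw [Nat.sub_sub, mul_add_one, add_comm]
  rw [hsub, pow_succ, mul_comm _ 2, mul_assoc] at hV
  have hD : 4 * s < D := by
    by_contra! h
    have := Fintype.card_pos (α := V)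
    simp [Nat.sub_eq_zero_of_le h] at hV
  refine (hasAlmostRegularSubgraph_or_exists_isBalancedPair hs hD hdeg).elim id ?_
  rintro ⟨A, B, hP, hB⟩
  exact hP.hasAlmostRegularSubgraph hs k (by omega)

end SimpleGraph

open Real

lemma half_le_logb_eight_mul_div {n : ℕ} {d : ℝ} (hd : 0 < d) (hdn : d ≤ 5 * n) :
    1 / 2 ≤ logb 2 (8 * n / d) := by
  have hn : (0 : ℝ) < n := by linarith
  rw [le_logb_iff_rpow_le one_lt_two (by positivity), ← sqrt_eq_rpow, le_div_iff₀ hd]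
  nlinarith [sq_sqrt (zero_le_two : (0 : ℝ) ≤ 2), sqrt_nonneg 2]

lemma exists_nat_le_two_pow_mul_ceil_sub {n : ℕ} {d L : ℝ} (hL : 1 / 2 ≤ L)
    (hpow : 8 * n / d ≤ 2 ^ L) (ht : 1 < d / (500 * L)) :
    ∃ s k : ℕ, d / (500 * L) ≤ s ∧ n ≤ 2 ^ (k + 1) * (⌈d / 5⌉₊ - 4 * s * (k + 1)) := by
  set t := d / (500 * L) with ht_def
  have hd : d = 500 * L * t := by rw [ht_def]; field_simp
  have hdpos : 0 < d := by rw [hd]; positivity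
  refine ⟨⌈t⌉₊, ⌈L⌉₊ + 1, Nat.le_ceil t, ?_⟩
  set s := ⌈t⌉₊
  set k := ⌈L⌉₊ + 1
  have hs : (s : ℝ) < 2 * t := by linarith [Nat.ceil_lt_add_one (by linarith : 0 ≤ t)]
  have hkL : L + 1 ≤ k := by push_cast [k]; linarith [Nat.le_ceil L]
  have hk : (k : ℝ) < L + 2 := by
    push_cast [k]; linarith [Nat.ceil_lt_add_one (by linarith : 0 ≤ L)]
  have hsk : 4 * (s : ℝ) * (k + 1) ≤ d / 5 - d / 12 := by
    rw [hd]
    have : (s : ℝ) * (k + 1) ≤ 2 * t * (L + 3) := by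
      nlinarith [(Nat.cast_nonneg s : (0 : ℝ) ≤ s), (Nat.cast_nonneg k : (0 : ℝ) ≤ k)]
    nlinarith
  have hceil : (4 * s * (k + 1) : ℕ) ≤ ⌈d / 5⌉₊ := by
    exact_mod_cast (by push_cast; linarith [Nat.le_ceil (d / 5)] :
      ((4 * s * (k + 1) : ℕ) : ℝ) ≤ ⌈d / 5⌉₊)
  have hgap : d / 12 ≤ ((⌈d / 5⌉₊ - 4 * s * (k + 1) : ℕ) : ℝ) := by
    rw [Nat.cast_sub hceil]; push_cast; linarith [Nat.le_ceil (d / 5)]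
  have htwo : 32 * n / d ≤ (2 : ℝ) ^ (k + 1) := by
    calc 32 * n / d = 4 * (8 * n / d) := by ring
      _ ≤ 2 ^ (2 : ℝ) * 2 ^ L := by norm_num; linarith
      _ = 2 ^ (L + 2) := by rw [← rpow_add two_pos, add_comm]
      _ ≤ 2 ^ ((k + 1 : ℕ) : ℝ) := by
        apply rpow_le_rpow_of_exponent_le one_le_two; push_cast; linarith
      _ = 2 ^ (k + 1) := rpow_natCast 2 (k + 1)
  have : (n : ℝ) ≤ 2 ^ (k + 1) * ((⌈d / 5⌉₊ - 4 * s * (k + 1) : ℕ) : ℝ) :=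
    calc (n : ℝ) ≤ 32 * n / d * (d / 12) := by
          field_simp; nlinarith [(Nat.cast_nonneg n : (0 : ℝ) ≤ n)]
      _ ≤ _ := mul_le_mul htwo hgap (by positivity) (by positivity)
  exact_mod_cast this

/-- A graph on at most `n` vertices with all degrees in `[d/5, d]`,
`d ≥ 1`, contains a nonempty subgraph `H` whose minimum degree is at least `Δ(H)/4`
and at least `d / (500 * log₂(8n/d))`. -/
theorem stmt_5 {V : Type*} [Fintype V] [Nonempty V] (G : SimpleGraph V) [DecidableRel G.Adj]
    (n : ℕ) (hn : Fintype.card V ≤ n) (d : ℝ) (hd : 1 ≤ d)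
    (hdeg : ∀ v : V, d / 5 ≤ (G.degree v : ℝ) ∧ (G.degree v : ℝ) ≤ d) :
    ∃ H : G.Subgraph, H.verts.Nonempty ∧
      (∀ v ∈ H.verts, ∀ w ∈ H.verts,
        ({x | H.Adj w x}.ncard : ℝ) ≤ 4 * ({x | H.Adj v x}.ncard : ℝ)) ∧
      (∀ v ∈ H.verts,
        d / (500 * Real.logb 2 (8 * n / d)) ≤ ({x | H.Adj v x}.ncard : ℝ)) := by
  classical
  obtain ⟨v₀⟩ := ‹Nonempty V›
  have hdn : d ≤ 5 * n := by
    have := (hdeg v₀).1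
    have : (G.degree v₀ : ℝ) < n := by exact_mod_cast (G.degree_lt_card_verts v₀).trans_le hn
    linarith
  have hL := half_le_logb_eight_mul_div (by linarith) hdn
  obtain ⟨s, hts, H, hH, hdegH⟩ : ∃ s : ℕ, d / (500 * logb 2 (8 * n / d)) ≤ s ∧
      G.HasAlmostRegularSubgraph s := by
    by_cases ht : d / (500 * logb 2 (8 * n / d)) ≤ 1
    · have : (0 : ℝ) < G.degree v₀ := by linarith [(hdeg v₀).1]
      obtain ⟨w, hw⟩ := (G.degree_pos_iff_exists_adj v₀).mp (by exact_mod_cast this)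
      exact ⟨1, by exact_mod_cast ht, G.hasAlmostRegularSubgraph_one_of_adj hw⟩
    · have hpow : 8 * n / d ≤ 2 ^ logb 2 (8 * n / d) :=
        (rpow_logb two_pos one_lt_two.ne' (div_pos (by linarith) (by linarith))).ge
      obtain ⟨s, k, hts, hk⟩ := exists_nat_le_two_pow_mul_ceil_sub hL hpow (not_le.mp ht)
      have hs : 1 ≤ s := by exact_mod_cast (not_le.mp ht).trans_le hts |>.le
      exact ⟨s, hts, G.hasAlmostRegularSubgraph_of_card_le hs
        (fun v => Nat.ceil_le.mpr (hdeg v).1) (hn.trans hk)⟩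
  refine ⟨H, hH, fun v hv w hw => ?_, fun v hv => hts.trans (by exact_mod_cast (hdegH v hv).1)⟩
  have := (hdegH v hv).1
  have := (hdegH w hw).2
  exact_mod_cast (by omega : {x | H.Adj w x}.ncard ≤ 4 * {x | H.Adj v x}.ncard)
end

section
/- Let d be a positive integer, 0 < ε ≤ 1/100, and t a positive integer. If X ~ Bin(d, ε), then P(X ≥ ⌊(5/4)εd⌋ + t) ≤ exp(-(t + εd)/60). -/
/-!
Write `L = log (5/4)` and `f = ⌊(5/4)εd⌋`. If `f ≥ 1`, the exponential-moment (Chernoff) bound with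
base `5/4` gives `P(X ≥ f + t) ≤ exp(εd/4 - (f + t) L)`, and since `εd < (4/5)(f + 1)` and
`L > 133/600` the exponent is at most `-(t + εd)/60` as soon as `5f + 123t ≥ 128`. If `f = 0`, then
`εd < 4/5` and the union bound `P(X ≥ t) ≤ C(d,t) εᵗ ≤ (εd)ᵗ ≤ (4/5)ᵗ` suffices.
-/

open Finset Real

/-- `P(Bin(n, p) ≥ m)`. -/
noncomputable def binomialTail (n m : ℕ) (p : ℝ) : ℝ :=
  ∑ k ∈ (range (n + 1)).filter (fun k => m ≤ k), (n.choose k : ℝ) * p ^ k * (1 - p) ^ (n - k)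

theorem sum_choose_mul_pow_mul_one_sub_pow (n : ℕ) (p : ℝ) :
    ∑ k ∈ range (n + 1), (n.choose k : ℝ) * p ^ k * (1 - p) ^ (n - k) = 1 := by
  calc _ = (p + (1 - p)) ^ n := by rw [add_pow]; exact sum_congr rfl fun k _ => by ring
    _ = 1 := by rw [add_sub_cancel, one_pow]

section binomialTail

variable {n m : ℕ} {p : ℝ}

theorem binomialTail_le_choose_mul_pow (hp0 : 0 ≤ p) (hp1 : p ≤ 1) :
    binomialTail n m p ≤ n.choose m * p ^ m := by
  have hIco : (range (n + 1)).filter (fun k => m ≤ k) = Ico m (n + 1) := by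
    ext k; simp only [mem_filter, mem_range, mem_Ico]; omega
  calc binomialTail n m p
      = ∑ k ∈ range (n + 1 - m), (n.choose (m + k) : ℝ) * p ^ (m + k) * (1 - p) ^ (n - (m + k)) := by
        rw [binomialTail, hIco, sum_Ico_eq_sum_range]
    _ ≤ ∑ k ∈ range (n + 1 - m),
          n.choose m * p ^ m * ((n - m).choose k * p ^ k * (1 - p) ^ (n - m - k)) := by
        refine sum_le_sum fun k hk => ?_
        have hk : m + k ≤ n := by rw [mem_range] at hk; omega
        -- `C(n, m + k) ≤ C(n, m + k) C(m + k, m) = C(n, m) C(n - m, k)`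
        have h : (n.choose (m + k) : ℝ) ≤ n.choose m * (n - m).choose k := by
          have hmul := Nat.choose_mul (n := n) (k := m + k) (s := m) (by omega)
          rw [Nat.add_sub_cancel_left] at hmul
          exact_mod_cast hmul ▸ Nat.le_mul_of_pos_right _ (Nat.choose_pos (by omega))
        rw [pow_add, Nat.sub_add_eq]
        calc (n.choose (m + k) : ℝ) * (p ^ m * p ^ k) * (1 - p) ^ (n - m - k)
            ≤ n.choose m * (n - m).choose k * (p ^ m * p ^ k) * (1 - p) ^ (n - m - k) := by gcongr
          _ = _ := by ring
    _ ≤ ∑ k ∈ range (n - m + 1),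
          n.choose m * p ^ m * ((n - m).choose k * p ^ k * (1 - p) ^ (n - m - k)) :=
        sum_le_sum_of_subset_of_nonneg (range_subset_range.mpr (by omega))
          fun _ _ _ => by positivity
    _ = n.choose m * p ^ m := by
        rw [← mul_sum, sum_choose_mul_pow_mul_one_sub_pow, mul_one]

theorem binomialTail_le_div_pow {c : ℝ} (hp0 : 0 ≤ p) (hp1 : p ≤ 1) (hc : 1 ≤ c) :
    binomialTail n m p ≤ (c * p + (1 - p)) ^ n / c ^ m := by
  rw [add_pow, sum_div, binomialTail]
  refine (sum_le_sum fun k hk => ?_).trans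
    (sum_le_sum_of_subset_of_nonneg (filter_subset _ _) fun _ _ _ => by positivity)
  have hcmk : c ^ m ≤ c ^ k := pow_le_pow_right₀ hc (mem_filter.mp hk).2
  rw [le_div_iff₀ (by positivity), mul_pow]
  calc (n.choose k : ℝ) * p ^ k * (1 - p) ^ (n - k) * c ^ m
      ≤ (n.choose k : ℝ) * p ^ k * (1 - p) ^ (n - k) * c ^ k := by gcongr
    _ = c ^ k * p ^ k * (1 - p) ^ (n - k) * n.choose k := by ring

theorem binomialTail_le_exp {c : ℝ} (hp0 : 0 ≤ p) (hp1 : p ≤ 1) (hc : 1 ≤ c) :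
    binomialTail n m p ≤ exp ((c - 1) * p * n - m * log c) := by
  calc binomialTail n m p ≤ (c * p + (1 - p)) ^ n / c ^ m := binomialTail_le_div_pow hp0 hp1 hc
    _ ≤ exp ((c - 1) * p) ^ n / c ^ m := by
        gcongr
        linarith [add_one_le_exp ((c - 1) * p), show c * p + (1 - p) = (c - 1) * p + 1 by ring]
    _ = exp ((c - 1) * p * n - m * log c) := by
        rw [exp_sub, exp_nat_mul, exp_log (by linarith), ← exp_nat_mul, mul_comm]

end binomialTail

theorem lt_log_five_div_four : 133 / 600 < log (5 / 4) := by
  rw [lt_log_iff_exp_lt (by norm_num)]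
  refine (exp_bound' (x := 133 / 600) (by norm_num) (by norm_num) (n := 4) (by norm_num)).trans_lt ?_
  norm_num [sum_range_succ, Nat.factorial]

theorem stmt_8_general (d : ℕ) (t : ℕ) (ht : 1 ≤ t) (ε : ℝ)
    (hε0 : 0 < ε) (hε : ε ≤ 1 / 100) :
    ∑ k ∈ (Finset.range (d + 1)).filter (fun k => ⌊5 / 4 * ε * (d : ℝ)⌋₊ + t ≤ k),
      (d.choose k : ℝ) * ε ^ k * (1 - ε) ^ (d - k) ≤
    Real.exp (-((t : ℝ) + ε * d) / 60) := by
  change binomialTail d (⌊5 / 4 * ε * (d : ℝ)⌋₊ + t) ε ≤ _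
  have hε1 : ε ≤ 1 := hε.trans (by norm_num)
  have hL := lt_log_five_div_four
  have ht' : (1 : ℝ) ≤ t := by exact_mod_cast ht
  have hfloor := Nat.lt_floor_add_one (5 / 4 * ε * (d : ℝ))
  rcases Nat.eq_zero_or_pos ⌊5 / 4 * ε * (d : ℝ)⌋₊ with hf | hf
  · rw [hf, zero_add]
    rw [hf, Nat.cast_zero, zero_add] at hfloor
    calc binomialTail d t ε ≤ d.choose t * ε ^ t := binomialTail_le_choose_mul_pow hε0.le hε1
      _ ≤ (ε * d) ^ t := by
          rw [mul_pow, mul_comm]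
          gcongr
          exact_mod_cast Nat.choose_le_pow d t
      _ ≤ (4 / 5) ^ t := by gcongr; linarith
      _ = exp (-(t * log (5 / 4))) := by
          rw [exp_neg, exp_nat_mul, exp_log (by norm_num), ← inv_pow]; norm_num
      _ ≤ exp (-((t : ℝ) + ε * d) / 60) := by gcongr; nlinarith
  · have hf' : (1 : ℝ) ≤ ⌊5 / 4 * ε * (d : ℝ)⌋₊ := by exact_mod_cast hf
    refine (binomialTail_le_exp (c := 5 / 4) hε0.le hε1 (by norm_num)).trans (exp_le_exp.mpr ?_)
    push_cast
    nlinarith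

/-- For `X ~ Bin(d, ε)` with `0 < ε ≤ 1/100` and positive integers `d, t`,
`P(X ≥ ⌊(5/4)εd⌋ + t) ≤ exp(-(t + εd)/60)`. -/
theorem stmt_8 (d : ℕ) (hd : 1 ≤ d) (t : ℕ) (ht : 1 ≤ t) (ε : ℝ)
    (hε0 : 0 < ε) (hε : ε ≤ 1 / 100) :
    ∑ k ∈ (Finset.range (d + 1)).filter (fun k => ⌊5 / 4 * ε * (d : ℝ)⌋₊ + t ≤ k),
      (d.choose k : ℝ) * ε ^ k * (1 - ε) ^ (d - k) ≤
    Real.exp (-((t : ℝ) + ε * d) / 60) :=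
  stmt_8_general d t ht ε hε0 hε
end

section
/- Define sequences by d₀ = d, Δ₀ = λd (with λ ≥ 1, d > 0), and while Δᵢ > dᵢ + 10⁷, let εᵢ be maximal subject to εᵢ ≤ 1/100 and Δᵢ ≥ (1+10εᵢ)dᵢ, and set d_{i+1} = (1 - (5/4)εᵢ)dᵢ, Δ_{i+1} = (1 - (7/4)εᵢ)Δᵢ. Then for every index j reached before termination, d_j ≥ d/λ³. -/
/-!
Each step multiplies `d` by `1 - 5ε/4` and `Δ` by `1 - 7ε/4`, and for `0 < ε ≤ 1/100` one has
`(1 - 7ε/4)³ ≤ (1 - 5ε/4)⁴`, so `Δ³ / d⁴` never increases and stays at most `λ³ / d₀`.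
Since also `d ≤ Δ` throughout (this uses `Δ ≥ (1 + 10ε) d`), `d³ ≤ Δ³ ≤ (λ³ / d₀) d⁴`,
i.e. `d ≥ d₀ / λ³`.
-/

lemma one_sub_half_pow_three_le {ε : ℝ} (hε₀ : 0 ≤ ε) (hε : ε ≤ 1 / 100) :
    (1 - ε / 2) ^ 3 ≤ 1 - 5 / 4 * ε := by
  nlinarith [mul_nonneg hε₀ hε₀, mul_nonneg (mul_nonneg hε₀ hε₀) hε₀]

lemma one_sub_seven_quarters_le (ε : ℝ) : 1 - 7 / 4 * ε ≤ (1 - ε / 2) * (1 - 5 / 4 * ε) := by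
  nlinarith [sq_nonneg ε]

lemma one_sub_seven_quarters_pow_three_le {ε : ℝ} (hε₀ : 0 ≤ ε) (hε : ε ≤ 1 / 100) :
    (1 - 7 / 4 * ε) ^ 3 ≤ (1 - 5 / 4 * ε) ^ 4 := by
  have h₅ : 0 ≤ 1 - 5 / 4 * ε := by linarith
  calc (1 - 7 / 4 * ε) ^ 3 ≤ ((1 - ε / 2) * (1 - 5 / 4 * ε)) ^ 3 :=
        pow_le_pow_left₀ (by linarith) (one_sub_seven_quarters_le ε) 3
    _ = (1 - ε / 2) ^ 3 * (1 - 5 / 4 * ε) ^ 3 := mul_pow _ _ _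
    _ ≤ (1 - 5 / 4 * ε) * (1 - 5 / 4 * ε) ^ 3 := by
        gcongr
        exact one_sub_half_pow_three_le hε₀ hε
    _ = (1 - 5 / 4 * ε) ^ 4 := by ring

lemma step_pow_le {K ε d Δ : ℝ} (hε₀ : 0 ≤ ε) (hε : ε ≤ 1 / 100) (hΔ : 0 ≤ Δ)
    (h : Δ ^ 3 ≤ K * d ^ 4) :
    ((1 - 7 / 4 * ε) * Δ) ^ 3 ≤ K * ((1 - 5 / 4 * ε) * d) ^ 4 :=
  calc ((1 - 7 / 4 * ε) * Δ) ^ 3 = (1 - 7 / 4 * ε) ^ 3 * Δ ^ 3 := mul_pow _ _ _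
    _ ≤ (1 - 5 / 4 * ε) ^ 4 * (K * d ^ 4) :=
        mul_le_mul (one_sub_seven_quarters_pow_three_le hε₀ hε) h (by positivity) (by positivity)
    _ = K * ((1 - 5 / 4 * ε) * d) ^ 4 := by ring

lemma step_le {ε d Δ : ℝ} (hε₀ : 0 ≤ ε) (hε : ε ≤ 1 / 100) (hd : 0 ≤ d)
    (h : (1 + 10 * ε) * d ≤ Δ) :
    (1 - 5 / 4 * ε) * d ≤ (1 - 7 / 4 * ε) * Δ :=
  calc (1 - 5 / 4 * ε) * d ≤ (1 - 7 / 4 * ε) * ((1 + 10 * ε) * d) := by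
        nlinarith [mul_nonneg (mul_nonneg hε₀ hε₀) hd, mul_nonneg hε₀ hd]
    _ ≤ (1 - 7 / 4 * ε) * Δ := by gcongr; linarith

lemma inv_le_of_pow_three_le {K d Δ : ℝ} (hd : 0 < d) (hdΔ : d ≤ Δ) (h : Δ ^ 3 ≤ K * d ^ 4) :
    K⁻¹ ≤ d := by
  have hKd : 1 ≤ K * d := by
    have : d ^ 3 * 1 ≤ d ^ 3 * (K * d) :=
      calc d ^ 3 * 1 = d ^ 3 := mul_one _
        _ ≤ Δ ^ 3 := pow_le_pow_left₀ hd.le hdΔ 3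
        _ ≤ K * d ^ 4 := h
        _ = d ^ 3 * (K * d) := by ring
    exact le_of_mul_le_mul_left this (by positivity)
  have hK : 0 < K := pos_of_mul_pos_left (one_pos.trans_le hKd) hd.le
  rw [inv_le_iff_one_le_mul₀ hK, mul_comm]
  exact hKd

lemma pos_le_and_pow_le_of_steps {K : ℝ} {d Δ ε : ℕ → ℝ} {j : ℕ}
    (hd₀ : 0 < d 0) (hdΔ₀ : d 0 ≤ Δ 0) (hK₀ : Δ 0 ^ 3 ≤ K * d 0 ^ 4)
    (hstep : ∀ i < j, 0 < ε i ∧ ε i ≤ 1 / 100 ∧ (1 + 10 * ε i) * d i ≤ Δ i ∧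
      d (i + 1) = (1 - 5 / 4 * ε i) * d i ∧ Δ (i + 1) = (1 - 7 / 4 * ε i) * Δ i) :
    0 < d j ∧ d j ≤ Δ j ∧ Δ j ^ 3 ≤ K * d j ^ 4 := by
  induction j with
  | zero => exact ⟨hd₀, hdΔ₀, hK₀⟩
  | succ n ih =>
    obtain ⟨hd, hdΔ, hpow⟩ := ih fun i hi => hstep i (Nat.lt_succ_of_lt hi)
    obtain ⟨hε₀, hε, hΔ, hd₁, hΔ₁⟩ := hstep n (Nat.lt_succ_self n)
    rw [hd₁, hΔ₁]
    exact ⟨mul_pos (by linarith) hd, step_le hε₀.le hε hd.le hΔ,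
      step_pow_le hε₀.le hε (hd.le.trans hdΔ) hpow⟩

/-- For the iterative regularisation sequences (`d 0 = d₀`, `Δ 0 = λ·d₀`;
at each non-terminal step `Δ i > d i + 10⁷` choose `ε i` maximal with `ε i ≤ 1/100`
and `Δ i ≥ (1 + 10 ε i) d i`, and set `d (i+1) = (1 - (5/4) ε i) d i`,
`Δ (i+1) = (1 - (7/4) ε i) Δ i`), every index `j` reached before termination
satisfies `d j ≥ d₀ / λ³`. -/
theorem stmt_9 (d₀ lam : ℝ) (hlam : 1 ≤ lam) (hd₀ : 0 < d₀)
    (d Δ ε : ℕ → ℝ)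
    (h0 : d 0 = d₀) (hΔ0 : Δ 0 = lam * d₀)
    (hrec : ∀ i : ℕ, Δ i > d i + 10 ^ 7 →
      0 < ε i ∧ ε i ≤ 1 / 100 ∧ (1 + 10 * ε i) * d i ≤ Δ i ∧
      (ε i = 1 / 100 ∨ Δ i = (1 + 10 * ε i) * d i) ∧
      d (i + 1) = (1 - 5 / 4 * ε i) * d i ∧
      Δ (i + 1) = (1 - 7 / 4 * ε i) * Δ i) :
    ∀ j : ℕ, (∀ i < j, Δ i > d i + 10 ^ 7) → d₀ / lam ^ 3 ≤ d j := by
  intro j hj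
  have hstep : ∀ i < j, 0 < ε i ∧ ε i ≤ 1 / 100 ∧ (1 + 10 * ε i) * d i ≤ Δ i ∧
      d (i + 1) = (1 - 5 / 4 * ε i) * d i ∧ Δ (i + 1) = (1 - 7 / 4 * ε i) * Δ i := by
    intro i hi
    obtain ⟨hε₀, hε, hΔ, -, hd₁, hΔ₁⟩ := hrec i (hj i hi)
    exact ⟨hε₀, hε, hΔ, hd₁, hΔ₁⟩
  have hdΔ₀ : d 0 ≤ Δ 0 := by rw [h0, hΔ0]; exact le_mul_of_one_le_left hd₀.le hlam
  have hK₀ : Δ 0 ^ 3 ≤ lam ^ 3 / d₀ * d 0 ^ 4 := by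
    rw [h0, hΔ0]; exact le_of_eq (by field_simp)
  obtain ⟨hd, hdΔ, hpow⟩ :=
    pos_le_and_pow_le_of_steps (h0 ▸ hd₀) hdΔ₀ hK₀ hstep
  simpa only [inv_div] using inv_le_of_pow_three_le hd hdΔ hpow
end

section
/- With the sequences dᵢ, Δᵢ, εᵢ defined as in the iterative regularisation (d₀ = d, Δ₀ = λd; εᵢ ≤ 1/100 maximal with Δᵢ ≥ (1+10εᵢ)dᵢ; d_{i+1} = (1-(5/4)εᵢ)dᵢ, Δ_{i+1} = (1-(7/4)εᵢ)Δᵢ; terminating when Δᵢ ≤ dᵢ + 10⁷), for all consecutive non-terminal indices j we have ε_{j+1} d_{j+1} ≤ (99/100) εⱼ dⱼ. In particular the process terminates after finitely many steps provided εⱼ dⱼ ≥ 10⁶ at every non-terminal step. -/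
/-!
At a capped step (`εⱼ = 1/100`) the next `d` is `(79/80) dⱼ` while `εⱼ₊₁ ≤ 1/100`, so
`εⱼ₊₁ dⱼ₊₁ ≤ (79/80) εⱼ dⱼ`. At an uncapped step the gap is tight, `Δⱼ = (1 + 10εⱼ) dⱼ`, and the
admissibility `(1 + 10εⱼ₊₁) dⱼ₊₁ ≤ Δⱼ₊₁` of the next step unwinds to
`εⱼ₊₁ dⱼ₊₁ ≤ (19/20) εⱼ dⱼ`. Hence `εⱼ dⱼ` decays geometrically along non-terminal steps, which
is incompatible with the lower bound `εⱼ dⱼ ≥ 10⁶` at every step.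
-/

open Filter Topology

theorem pos_of_forall_lt_eq_mul {d c : ℕ → ℝ} (h₀ : 0 < d 0) :
    ∀ {j : ℕ}, (∀ i < j, 0 < c i ∧ d (i + 1) = c i * d i) → 0 < d j
  | 0, _ => h₀
  | j + 1, h => by
    obtain ⟨hc, hd⟩ := h j j.lt_succ_self
    rw [hd]
    exact mul_pos hc (pos_of_forall_lt_eq_mul h₀ fun i hi => h i (hi.trans j.lt_succ_self))

theorem exists_lt_of_le_mul_of_lt_one {u : ℕ → ℝ} {r c : ℝ} (hr₀ : 0 ≤ r) (hr₁ : r < 1)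
    (hu : ∀ n, u (n + 1) ≤ r * u n) (hc : 0 < c) : ∃ n, u n < c := by
  have hlim : Tendsto (fun n => r ^ n * u 0) atTop (𝓝 0) := by
    simpa using (tendsto_pow_atTop_nhds_zero_of_lt_one hr₀ hr₁).mul_const (u 0)
  obtain ⟨n, hn⟩ := (hlim.eventually (gt_mem_nhds hc)).exists
  exact ⟨n, (le_geom hr₀ n fun k _ => hu k).trans_lt hn⟩

theorem eps_mul_le_of_regularisation_step {ε ε' d d' Δ Δ' : ℝ} (hd : 0 < d) (hε : 0 ≤ ε)
    (hε' : ε' ≤ 1 / 100) (hcase : ε = 1 / 100 ∨ Δ = (1 + 10 * ε) * d)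
    (hd' : d' = (1 - 5 / 4 * ε) * d) (hΔ' : Δ' = (1 - 7 / 4 * ε) * Δ)
    (hadm' : (1 + 10 * ε') * d' ≤ Δ') : ε' * d' ≤ 99 / 100 * (ε * d) := by
  rcases hcase with rfl | rfl
  · have hd'_nonneg : 0 ≤ d' := by rw [hd']; positivity
    calc ε' * d' ≤ 1 / 100 * d' := mul_le_mul_of_nonneg_right hε' hd'_nonneg
      _ ≤ 99 / 100 * (1 / 100 * d) := by rw [hd']; linarith
  · have htight : ε' * d' ≤ (19 / 20 * ε - 7 / 4 * ε ^ 2) * d := by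
      subst hd' hΔ'
      linarith
    nlinarith [mul_nonneg (sq_nonneg ε) hd.le, mul_nonneg hε hd.le]

theorem stmt_10_general (d₀ : ℝ) (hd₀ : 0 < d₀)
    (d Δ ε : ℕ → ℝ)
    (h0 : d 0 = d₀)
    (hrec : ∀ i : ℕ, Δ i > d i + 10 ^ 7 →
      0 < ε i ∧ ε i ≤ 1 / 100 ∧ (1 + 10 * ε i) * d i ≤ Δ i ∧
      (ε i = 1 / 100 ∨ Δ i = (1 + 10 * ε i) * d i) ∧
      d (i + 1) = (1 - 5 / 4 * ε i) * d i ∧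
      Δ (i + 1) = (1 - 7 / 4 * ε i) * Δ i) :
    (∀ j : ℕ, (∀ i ≤ j + 1, Δ i > d i + 10 ^ 7) →
      ε (j + 1) * d (j + 1) ≤ 99 / 100 * (ε j * d j)) ∧
    ((∀ j : ℕ, (∀ i ≤ j, Δ i > d i + 10 ^ 7) → 10 ^ 6 ≤ ε j * d j) →
      ∃ k : ℕ, Δ k ≤ d k + 10 ^ 7) := by
  have hd_pos : ∀ j, (∀ i < j, Δ i > d i + 10 ^ 7) → 0 < d j := fun j hj =>
    pos_of_forall_lt_eq_mul (h0 ▸ hd₀) fun i hi => by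
      obtain ⟨-, hε, -, -, hdi, -⟩ := hrec i (hj i hi)
      exact ⟨by linarith, hdi⟩
  have hcontract : ∀ j, (∀ i ≤ j + 1, Δ i > d i + 10 ^ 7) →
      ε (j + 1) * d (j + 1) ≤ 99 / 100 * (ε j * d j) := by
    intro j hj
    obtain ⟨hε, -, -, hcase, hd', hΔ'⟩ := hrec j (hj j j.le_succ)
    obtain ⟨-, hε', hadm', -⟩ := hrec (j + 1) (hj _ le_rfl)
    exact eps_mul_le_of_regularisation_step (hd_pos j fun i hi => hj i (by omega)) hε.le hε'
      hcase hd' hΔ' hadm'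
  refine ⟨hcontract, fun hlow => ?_⟩
  by_contra! hnonterm
  obtain ⟨n, hn⟩ := exists_lt_of_le_mul_of_lt_one (u := fun n => ε n * d n) (by norm_num)
    (by norm_num) (fun n => hcontract n fun i _ => hnonterm i) (by norm_num : (0 : ℝ) < 10 ^ 6)
  exact hn.not_ge (hlow n fun i _ => hnonterm i)

/-- With the iterative regularisation sequences, for consecutive
non-terminal indices `j`, `j+1` we have `ε (j+1) · d (j+1) ≤ (99/100) · ε j · d j`;
in particular, if `ε j · d j ≥ 10⁶` at every non-terminal step, the process
terminates: there is some `k` with `Δ k ≤ d k + 10⁷`. -/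
theorem stmt_10 (d₀ lam : ℝ) (hlam : 1 ≤ lam) (hd₀ : 0 < d₀)
    (d Δ ε : ℕ → ℝ)
    (h0 : d 0 = d₀) (hΔ0 : Δ 0 = lam * d₀)
    (hrec : ∀ i : ℕ, Δ i > d i + 10 ^ 7 →
      0 < ε i ∧ ε i ≤ 1 / 100 ∧ (1 + 10 * ε i) * d i ≤ Δ i ∧
      (ε i = 1 / 100 ∨ Δ i = (1 + 10 * ε i) * d i) ∧
      d (i + 1) = (1 - 5 / 4 * ε i) * d i ∧
      Δ (i + 1) = (1 - 7 / 4 * ε i) * Δ i) :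
    (∀ j : ℕ, (∀ i ≤ j + 1, Δ i > d i + 10 ^ 7) →
      ε (j + 1) * d (j + 1) ≤ 99 / 100 * (ε j * d j)) ∧
    ((∀ j : ℕ, (∀ i ≤ j, Δ i > d i + 10 ^ 7) → 10 ^ 6 ≤ ε j * d j) →
      ∃ k : ℕ, Δ k ≤ d k + 10 ^ 7) :=
  stmt_10_general d₀ hd₀ d Δ ε h0 hrec
end
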